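/- For every r ∈ ℕ there exist real constants C₂, C₃ > 0, depending on r, such that for every y ∈ ℝ with y ≠ 0 and every natural number n > max(C₂, C₃·|y|^{r+2}), one has |t_n(y) − exp(−π²y²)| < 1/|y|^r, where t_n(y) = (1 + (n·(exp(πiy/n) − 1))²/n)^n. -/

import Mathlib

lemma aux_pow_sub_pow (n : ℕ) (a b : ℂ) (M : ℝ) (hM : 1 ≤ M)
    (ha : ‖a‖ ≤ M) (hb : ‖b‖ ≤ M) :
    ‖a ^ n - b ^ n‖ ≤ n * M ^ n * ‖a - b‖ := by
  induction n with
  | zero => simp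
  | succ k ih =>
    have h1 : a ^ (k+1) - b ^ (k+1) = a ^ k * (a - b) + (a ^ k - b ^ k) * b := by ring
    have hak : ‖a ^ k‖ ≤ M ^ k := by
      rw [norm_pow]; exact pow_le_pow_left₀ (norm_nonneg a) ha k
    have hd : (0:ℝ) ≤ ‖a - b‖ := norm_nonneg _
    have hM0 : (0:ℝ) ≤ M := by linarith
    have e1 : ‖a^k * (a-b)‖ ≤ M^k * ‖a-b‖ := by
      rw [norm_mul]; exact mul_le_mul_of_nonneg_right hak hd
    have e2 : ‖(a^k - b^k) * b‖ ≤ ((k:ℝ) * M^k * ‖a-b‖) * M := by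
      rw [norm_mul]
      exact mul_le_mul ih hb (norm_nonneg _) (by positivity)
    have h2 : (0:ℝ) ≤ (k:ℝ) := Nat.cast_nonneg k
    calc ‖a ^ (k+1) - b ^ (k+1)‖
        ≤ ‖a ^ k * (a - b)‖ + ‖(a ^ k - b ^ k) * b‖ := by
          rw [h1]; exact norm_add_le _ _
      _ ≤ M ^ k * ‖a - b‖ + ((k:ℝ) * M ^ k * ‖a - b‖) * M :=
          add_le_add e1 e2
      _ ≤ (k+1 : ℕ) * M ^ (k+1) * ‖a - b‖ := by
          push_cast
          rw [pow_succ]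
          nlinarith [mul_nonneg (mul_nonneg (pow_nonneg hM0 k) hd)
            (by linarith : (0:ℝ) ≤ M - 1)]

lemma aux_abs_one_add (u : ℂ) :
    ‖1 + u‖ ≤ Real.exp (u.re + (‖u‖)^2 / 2) := by
  have h1 : (‖1+u‖)^2 = 1 + 2*u.re + (‖u‖)^2 := by
    rw [Complex.sq_norm, Complex.sq_norm, Complex.normSq_apply, Complex.normSq_apply]
    simp [Complex.add_re, Complex.add_im]
    ring
  have h2 := Real.add_one_le_exp (2*u.re + (‖u‖)^2)
  have h3 : Real.exp (u.re + (‖u‖)^2/2) ^ 2 = Real.exp (2*u.re + (‖u‖)^2) := by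
    rw [sq, ← Real.exp_add]; ring_nf
  nlinarith [norm_nonneg (1+u), Real.exp_pos (u.re + (‖u‖)^2/2)]

lemma aux_core (y : ℝ) (n : ℕ) (hn : 1 ≤ n) (hz : Real.pi * |y| ≤ n) :
    ‖(n:ℂ) * (Complex.exp (Real.pi * Complex.I * y / n) - 1) - Real.pi * Complex.I * y‖
      ≤ Real.pi ^ 2 * y ^ 2 / n ∧
    ‖(n:ℂ) * (Complex.exp (Real.pi * Complex.I * y / n) - 1)‖ ≤ 2 * Real.pi * |y| ∧
    ‖((n:ℂ) * (Complex.exp (Real.pi * Complex.I * y / n) - 1)) ^ 2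
        - ((-(Real.pi ^ 2) * y ^ 2 : ℝ) : ℂ)‖ ≤ 3 * Real.pi ^ 3 * |y| ^ 3 / n := by
  have hn0 : (0:ℝ) < n := by exact_mod_cast hn
  have hnC : (n:ℂ) ≠ 0 := Nat.cast_ne_zero.mpr (by omega)
  set u : ℂ := Real.pi * Complex.I * y / n with hu
  have hnu : (n:ℂ) * u = Real.pi * Complex.I * y := by
    rw [hu]; field_simp
  have habsu : ‖u‖ = Real.pi * |y| / n := by
    rw [hu]
    simp [norm_div, norm_mul, Complex.norm_I, Complex.norm_real, Complex.norm_natCast,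
      abs_of_pos Real.pi_pos]
  have hu1 : ‖u‖ ≤ 1 := by
    rw [habsu, div_le_one hn0]; exact hz
  have key : (n:ℂ) * (Complex.exp u - 1) - Real.pi * Complex.I * y
      = (n:ℂ) * (Complex.exp u - 1 - u) := by rw [← hnu]; ring
  have h1 : ‖(n:ℂ) * (Complex.exp u - 1) - Real.pi * Complex.I * y‖
      ≤ Real.pi ^ 2 * y ^ 2 / n := by
    rw [key, norm_mul, Complex.norm_natCast]
    calc (n:ℝ) * ‖Complex.exp u - 1 - u‖
        ≤ (n:ℝ) * (‖u‖) ^ 2 := by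
          exact mul_le_mul_of_nonneg_left (Complex.norm_exp_sub_one_sub_id_le hu1) (le_of_lt hn0)
      _ = Real.pi ^ 2 * y ^ 2 / n := by
          rw [habsu]; rw [div_pow]; rw [mul_pow]
          rw [sq_abs]
          field_simp
  have hpiy : ‖Real.pi * Complex.I * y‖ = Real.pi * |y| := by
    simp [norm_mul, Complex.norm_I, Complex.norm_real, abs_of_pos Real.pi_pos]
  have hsmall : Real.pi ^ 2 * y ^ 2 / n ≤ Real.pi * |y| := by
    rw [div_le_iff₀ hn0]
    have : Real.pi ^ 2 * y ^ 2 = (Real.pi * |y|) * (Real.pi * |y|) := by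
      rw [← sq_abs y]; ring
    rw [this]
    exact mul_le_mul_of_nonneg_left hz (by positivity)
  have h2 : ‖(n:ℂ) * (Complex.exp u - 1)‖ ≤ 2 * Real.pi * |y| := by
    calc ‖(n:ℂ) * (Complex.exp u - 1)‖
        = ‖((n:ℂ) * (Complex.exp u - 1) - Real.pi * Complex.I * y)
          + Real.pi * Complex.I * y‖ := by ring_nf
      _ ≤ ‖(n:ℂ) * (Complex.exp u - 1) - Real.pi * Complex.I * y‖
          + ‖Real.pi * Complex.I * y‖ := norm_add_le _ _
      _ ≤ Real.pi ^ 2 * y ^ 2 / n + Real.pi * |y| := by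
          rw [hpiy]; exact add_le_add h1 le_rfl
      _ ≤ 2 * Real.pi * |y| := by linarith
  have hw0 : ((-(Real.pi ^ 2) * y ^ 2 : ℝ) : ℂ) = (Real.pi * Complex.I * y) ^ 2 := by
    push_cast
    rw [mul_pow, mul_pow, Complex.I_sq]; ring
  have h3 : ‖((n:ℂ) * (Complex.exp u - 1)) ^ 2
      - ((-(Real.pi ^ 2) * y ^ 2 : ℝ) : ℂ)‖ ≤ 3 * Real.pi ^ 3 * |y| ^ 3 / n := by
    rw [hw0]
    have factored : ((n:ℂ) * (Complex.exp u - 1)) ^ 2 - (Real.pi * Complex.I * y) ^ 2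
        = ((n:ℂ) * (Complex.exp u - 1) - Real.pi * Complex.I * y)
          * ((n:ℂ) * (Complex.exp u - 1) + Real.pi * Complex.I * y) := by ring
    rw [factored, norm_mul]
    have hsum : ‖(n:ℂ) * (Complex.exp u - 1) + Real.pi * Complex.I * y‖
        ≤ 3 * Real.pi * |y| := by
      calc ‖(n:ℂ) * (Complex.exp u - 1) + Real.pi * Complex.I * y‖
          ≤ ‖(n:ℂ) * (Complex.exp u - 1)‖ + ‖Real.pi * Complex.I * y‖ :=
            norm_add_le _ _
        _ ≤ 2 * Real.pi * |y| + Real.pi * |y| := by rw [hpiy]; exact add_le_add h2 le_rfl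
        _ = 3 * Real.pi * |y| := by ring
    calc ‖(n:ℂ) * (Complex.exp u - 1) - Real.pi * Complex.I * y‖
          * ‖(n:ℂ) * (Complex.exp u - 1) + Real.pi * Complex.I * y‖
        ≤ (Real.pi ^ 2 * y ^ 2 / n) * (3 * Real.pi * |y|) := by
          exact mul_le_mul h1 hsum (norm_nonneg _) (by positivity)
      _ = 3 * Real.pi ^ 3 * |y| ^ 3 / n := by
          have h3y : |y| ^ 3 = y ^ 2 * |y| := by rw [pow_succ, sq_abs]
          field_simp [h3y]; rw [h3y]
  exact ⟨h1, h2, h3⟩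


noncomputable def tSeq (n : ℕ) (y : ℝ) : ℂ :=
  (1 + ((n : ℂ) * (Complex.exp (Real.pi * Complex.I * y / n) - 1)) ^ 2 / n) ^ n

set_option maxHeartbeats 1000000 in
theorem stmt6 (r : ℕ) :
    ∃ C₂ C₃ : ℝ, 0 < C₂ ∧ 0 < C₃ ∧
      ∀ y : ℝ, y ≠ 0 → ∀ n : ℕ, max C₂ (C₃ * |y| ^ (r + 2)) < n →
        ‖tSeq n y - ((Real.exp (-(Real.pi ^ 2) * y ^ 2) : ℝ) : ℂ)‖
          < 1 / |y| ^ r := by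
  set π := Real.pi with hπdef
  have hπ : (3:ℝ) < π := by rw [hπdef]; exact Real.pi_gt_three
  have hπ0 : (0:ℝ) < π := by linarith
  set Y₀ : ℝ := (r:ℝ) + 1 with hY₀def
  have hY₀1 : (1:ℝ) ≤ Y₀ := by rw [hY₀def]; have : (0:ℝ) ≤ (r:ℝ) := Nat.cast_nonneg r; linarith
  have hY₀0 : (0:ℝ) < Y₀ := by linarith
  set K : ℝ := Real.exp (4*π^2*Y₀^2) * (16*π^4*Y₀^4) + 6*π^3*Y₀^3 with hKdef
  have hK0 : 0 < K := by rw [hKdef]; positivity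
  refine ⟨K * Y₀^r + 4*π^2*Y₀^2 + 3*π^3*Y₀^3 + π*Y₀ + 1, 32*π^4, by positivity, by positivity,
    ?_⟩
  intro y hy n hn
  set C₂ : ℝ := K * Y₀^r + 4*π^2*Y₀^2 + 3*π^3*Y₀^3 + π*Y₀ + 1 with hC₂def
  have hC₂n : C₂ < n := lt_of_le_of_lt (le_max_left _ _) hn
  have hC₃n : 32*π^4 * |y| ^ (r+2) < n := lt_of_le_of_lt (le_max_right _ _) hn
  have hY : 0 < |y| := abs_pos.mpr hy
  have p1 : (0:ℝ) < K * Y₀^r := mul_pos hK0 (pow_pos hY₀0 r)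
  have p2 : (0:ℝ) < 4*π^2*Y₀^2 := by positivity
  have p3 : (0:ℝ) < 3*π^3*Y₀^3 := by positivity
  have p4 : (0:ℝ) < π*Y₀ := by positivity
  have hC₂pos : 0 < C₂ := by rw [hC₂def]; linarith
  have hn1 : 1 ≤ n := by
    rcases Nat.eq_zero_or_pos n with h | h
    · exfalso; rw [h] at hC₂n; norm_num at hC₂n; linarith
    · exact h
  have hn0 : (0:ℝ) < n := by exact_mod_cast hn1
  have hnC : (n:ℂ) ≠ 0 := Nat.cast_ne_zero.mpr (by omega)
  -- abbreviations
  set s : ℂ := (n:ℂ) * (Complex.exp (π * Complex.I * y / n) - 1) with hsdef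
  set w : ℂ := s ^ 2 with hwdef
  set w₀ : ℂ := ((-(π ^ 2) * y ^ 2 : ℝ) : ℂ) with hw₀def
  have htseq : tSeq n y = (1 + w / n) ^ n := rfl
  have hexpw₀ : ((Real.exp (-(π ^ 2) * y ^ 2) : ℝ) : ℂ) = Complex.exp w₀ := by
    rw [hw₀def]; exact Complex.ofReal_exp _
  have hw₀re : w₀.re = -(π^2) * y^2 := by rw [hw₀def, Complex.ofReal_re]
  rcases lt_or_ge (|y|) Y₀ with hYc | hYc
  · -- small |y| case
    have e1 : π * |y| ≤ π * Y₀ := by nlinarith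
    have hz : π * |y| ≤ n := by linarith
    obtain ⟨F1, F2, F3⟩ := aux_core y n hn1 hz
    have F2' : ‖s‖ ≤ 2*π*|y| := F2
    have F3' : ‖w - w₀‖ ≤ 3*π^3*|y|^3/n := F3
    clear F1 F2 F3
    clear_value w₀ w s
    have hwabs : ‖w‖ ≤ 4*π^2*|y|^2 := by
      rw [hwdef, norm_pow]
      calc ‖s‖ ^ 2 ≤ (2*π*|y|)^2 :=
            pow_le_pow_left₀ (norm_nonneg s) F2' 2
        _ = 4*π^2*|y|^2 := by ring
    have hy2Y : |y|^2 ≤ Y₀^2 := pow_le_pow_left₀ (abs_nonneg y) hYc.le 2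
    have hy₀sq : 4*π^2*|y|^2 ≤ 4*π^2*Y₀^2 := by nlinarith [sq_nonneg π]
    have hwn : ‖w‖ / n ≤ 1 := by
      rw [div_le_one hn0]; linarith
    -- term 1 : |(1+w/n)^n - exp w|
    have hbpow : (Complex.exp (w / n)) ^ n = Complex.exp w := by
      rw [← Complex.exp_nat_mul]; congr 1; field_simp
    have habswn : ‖w / (n:ℂ)‖ = ‖w‖ / n := by
      rw [norm_div, Complex.norm_natCast]
    have hM1 : (1:ℝ) ≤ Real.exp (‖w‖ / n) := Real.one_le_exp (by positivity)
    have ha : ‖1 + w/n‖ ≤ Real.exp (‖w‖ / n) := by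
      calc ‖1 + w/n‖ ≤ ‖(1:ℂ)‖ + ‖w/n‖ := norm_add_le _ _
        _ = 1 + ‖w‖ / n := by rw [habswn, norm_one]
        _ ≤ Real.exp (‖w‖ / n) := by
            have := Real.add_one_le_exp (‖w‖ / n); linarith
    have hb : ‖Complex.exp (w/n)‖ ≤ Real.exp (‖w‖ / n) := by
      rw [Complex.norm_exp]
      apply Real.exp_le_exp.mpr
      calc (w/(n:ℂ)).re ≤ ‖w/n‖ := Complex.re_le_norm _
        _ = ‖w‖ / n := habswn
    have hMn : Real.exp (‖w‖ / n) ^ n = Real.exp (‖w‖) := by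
      rw [← Real.exp_nat_mul]; congr 1; field_simp
    have hab : ‖1 + w/n - Complex.exp (w/n)‖ ≤ (‖w‖ / n)^2 := by
      have h' : ‖Complex.exp (w/n) - 1 - w/n‖ ≤ (‖w/n‖)^2 :=
        Complex.norm_exp_sub_one_sub_id_le (by rw [habswn]; exact hwn)
      calc ‖1 + w/n - Complex.exp (w/n)‖
          = ‖Complex.exp (w/n) - 1 - w/n‖ := by
            rw [← norm_neg]; ring_nf
        _ ≤ (‖w/n‖)^2 := h'
        _ = (‖w‖ / n)^2 := by rw [habswn]
    have hterm1 : ‖(1 + w/n)^n - Complex.exp w‖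
        ≤ Real.exp (‖w‖) * (‖w‖)^2 / n := by
      rw [← hbpow]
      calc ‖(1 + w/n)^n - (Complex.exp (w/n))^n‖
          ≤ n * Real.exp (‖w‖ / n) ^ n * ‖1 + w/n - Complex.exp (w/n)‖ :=
            aux_pow_sub_pow n _ _ _ hM1 ha hb
        _ ≤ n * Real.exp (‖w‖) * ((‖w‖ / n)^2) := by
            rw [hMn]
            exact mul_le_mul_of_nonneg_left hab (by positivity)
        _ = Real.exp (‖w‖) * (‖w‖)^2 / n := by
            have hnR : (n:ℝ) ≠ 0 := ne_of_gt hn0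
            have hgen : ∀ A E : ℝ, (n:ℝ) * E * ((A/(n:ℝ))^2) = E * A^2 / n := by
              intro A E
              field_simp
            exact hgen _ _
    -- term 2 : |exp w - exp w₀|
    have hww₀ : ‖w - w₀‖ ≤ 3*π^3*|y|^3/n := F3'
    have hy3Y : |y|^3 ≤ Y₀^3 := pow_le_pow_left₀ (abs_nonneg y) hYc.le 3
    have hy₀cube : 3*π^3*|y|^3 ≤ 3*π^3*Y₀^3 := by nlinarith [pow_pos hπ0 3]
    have hww₀1 : ‖w - w₀‖ ≤ 1 := by
      calc ‖w - w₀‖ ≤ 3*π^3*|y|^3/n := hww₀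
        _ ≤ 3*π^3*Y₀^3/n := div_le_div_of_nonneg_right hy₀cube hn0.le
        _ ≤ 1 := by rw [div_le_one hn0]; linarith
    have hterm2 : ‖Complex.exp w - Complex.exp w₀‖ ≤ 6*π^3*|y|^3/n := by
      have hsplit : Complex.exp w - Complex.exp w₀ = Complex.exp w₀ * (Complex.exp (w - w₀) - 1) := by
        rw [mul_sub, ← Complex.exp_add, mul_one]; ring_nf
      rw [hsplit, norm_mul, Complex.norm_exp]
      have h1 : Real.exp w₀.re ≤ 1 := by
        rw [hw₀re]; apply Real.exp_le_one_iff.mpr; nlinarith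
      have h2 : ‖Complex.exp (w - w₀) - 1‖ ≤ 2 * ‖w - w₀‖ :=
        Complex.norm_exp_sub_one_le hww₀1
      calc Real.exp w₀.re * ‖Complex.exp (w - w₀) - 1‖
          ≤ 1 * (2 * ‖w - w₀‖) :=
            mul_le_mul h1 h2 (norm_nonneg _) zero_le_one
        _ = 2 * ‖w - w₀‖ := by ring
        _ ≤ 2 * (3*π^3*|y|^3/n) := by linarith
        _ = 6*π^3*|y|^3/n := by ring
    -- combine
    have hexpmono : Real.exp (‖w‖) ≤ Real.exp (4*π^2*Y₀^2) :=
      Real.exp_le_exp.mpr (by linarith)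
    have hwsq : (‖w‖)^2 ≤ 16*π^4*Y₀^4 := by
      calc (‖w‖)^2 ≤ (4*π^2*Y₀^2)^2 :=
            pow_le_pow_left₀ (norm_nonneg w) (by linarith) 2
        _ = 16*π^4*Y₀^4 := by ring
    have htotal : ‖tSeq n y - ((Real.exp (-(π ^ 2) * y ^ 2) : ℝ) : ℂ)‖ ≤ K / n := by
      rw [htseq, hexpw₀]
      calc ‖(1 + w/n)^n - Complex.exp w₀‖
          ≤ ‖(1 + w/n)^n - Complex.exp w‖ +
            ‖Complex.exp w - Complex.exp w₀‖ := by
            have hdecomp : (1 + w/n)^n - Complex.exp w₀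
                = ((1 + w/n)^n - Complex.exp w) + (Complex.exp w - Complex.exp w₀) := by ring
            rw [hdecomp]; exact norm_add_le _ _
        _ ≤ Real.exp (‖w‖) * (‖w‖)^2 / n + 6*π^3*|y|^3/n :=
            add_le_add hterm1 hterm2
        _ ≤ Real.exp (4*π^2*Y₀^2) * (16*π^4*Y₀^4) / n + 3*π^3*Y₀^3/n + 3*π^3*Y₀^3/n := by
            have b1 : Real.exp (‖w‖) * (‖w‖)^2
                ≤ Real.exp (4*π^2*Y₀^2) * (16*π^4*Y₀^4) :=
              mul_le_mul hexpmono hwsq (by positivity) (by positivity)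
            have b2 : 6*π^3*|y|^3 ≤ 3*π^3*Y₀^3 + 3*π^3*Y₀^3 := by linarith
            have hb1' := div_le_div_of_nonneg_right b1 hn0.le
            have hb2' := div_le_div_of_nonneg_right b2 hn0.le
            rw [add_div] at hb2'
            linarith
        _ = K / n := by rw [hKdef]; field_simp; ring
    have hfinal : K / n < 1 / |y|^r := by
      have h1 : K * Y₀^r < n := by linarith
      have h2 : K / n < 1 / Y₀^r := by
        rw [div_lt_div_iff₀ hn0 (pow_pos hY₀0 r)]
        linarith
      have h3 : (1:ℝ) / Y₀^r ≤ 1 / |y|^r :=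
        one_div_le_one_div_of_le (pow_pos hY r)
          (pow_le_pow_left₀ (abs_nonneg y) (le_of_lt hYc) r)
      linarith
    exact lt_of_le_of_lt htotal hfinal
  · -- large |y| case
    have hY1 : 1 ≤ |y| := le_trans hY₀1 hYc
    have hpow2 : |y|^2 ≤ |y|^(r+2) := pow_le_pow_right₀ hY1 (by omega)
    have hmul1 : 32*π^4*|y|^2 ≤ 32*π^4*|y|^(r+2) :=
      mul_le_mul_of_nonneg_left hpow2 (by positivity)
    have hn2 : 32*π^4*|y|^2 ≤ n := by linarith
    have hπ3 : (27:ℝ) ≤ π^3 := by nlinarith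
    have h32 : (1:ℝ) ≤ 32*π^3*|y| := by
      nlinarith [mul_le_mul_of_nonneg_left hY1 (by linarith : (0:ℝ) ≤ 32*π^3)]
    have hz' : π*|y| ≤ 32*π^4*|y|^2 := by
      nlinarith [mul_le_mul_of_nonneg_left h32 (le_of_lt (mul_pos hπ0 hY))]
    have hz : π * |y| ≤ n := le_trans hz' hn2
    obtain ⟨F1, F2, F3⟩ := aux_core y n hn1 hz
    have F2' : ‖s‖ ≤ 2*π*|y| := F2
    have F3' : ‖w - w₀‖ ≤ 3*π^3*|y|^3/n := F3
    clear F1 F2 F3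
    clear_value w₀ w s
    have hwabs : ‖w‖ ≤ 4*π^2*|y|^2 := by
      rw [hwdef, norm_pow]
      calc ‖s‖ ^ 2 ≤ (2*π*|y|)^2 :=
            pow_le_pow_left₀ (norm_nonneg s) F2' 2
        _ = 4*π^2*|y|^2 := by ring
    have hww₀ : ‖w - w₀‖ ≤ 3*π^3*|y|^3/n := F3'
    have hre : w.re ≤ -(π^2) * y^2 + 3*π^3*|y|^3/n := by
      have hdecomp : w.re = w₀.re + (w - w₀).re := by
        rw [Complex.sub_re]; ring
      have := Complex.re_le_norm (w - w₀)
      rw [hdecomp, hw₀re]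
      linarith
    have habs_t : ‖tSeq n y‖ ≤ Real.exp (w.re + (‖w‖)^2/(2*n)) := by
      rw [htseq, norm_pow]
      have hcast : ((n:ℂ)) = ((n:ℝ):ℂ) := by push_cast; rfl
      calc (‖1 + w/n‖)^n
          ≤ (Real.exp ((w/(n:ℂ)).re + (‖w/(n:ℂ)‖)^2/2))^n :=
            pow_le_pow_left₀ (norm_nonneg _) (aux_abs_one_add _) n
        _ = Real.exp (n * ((w/(n:ℂ)).re + (‖w/(n:ℂ)‖)^2/2)) :=
            (Real.exp_nat_mul _ n).symm
        _ = Real.exp (w.re + (‖w‖)^2/(2*n)) := by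
            congr 1
            rw [hcast, Complex.div_ofReal_re, norm_div, Complex.norm_real,
              Real.norm_eq_abs, abs_of_pos hn0]
            have hnR : (n:ℝ) ≠ 0 := ne_of_gt hn0
            have hgen2 : ∀ A B : ℝ, (n:ℝ) * (B/(n:ℝ) + (A/(n:ℝ))^2/2) = B + A^2/(2*(n:ℝ)) := by
              intro A B
              field_simp
            exact hgen2 _ _
    have hexp_bound : w.re + (‖w‖)^2/(2*n) ≤ -(7*|y|^2) := by
      have hw2 : (‖w‖)^2 ≤ 16*π^4*|y|^4 := by
        calc (‖w‖)^2 ≤ (4*π^2*|y|^2)^2 :=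
              pow_le_pow_left₀ (norm_nonneg w) hwabs 2
          _ = 16*π^4*|y|^4 := by ring
      have q1 : (3:ℝ) ≤ 32*π*|y| := by
        have := mul_le_mul_of_nonneg_left hY1 (by linarith : (0:ℝ) ≤ 32*π)
        linarith
      have q2 : 3*π^3*|y|^3 ≤ 32*π^4*|y|^4 := by
        have step := mul_le_mul_of_nonneg_left q1 (by positivity : (0:ℝ) ≤ π^3*|y|^3)
        ring_nf at step ⊢
        linarith
      have e1 : 3*π^3*|y|^3/n ≤ |y|^2 := by
        rw [div_le_iff₀ hn0]
        have step := mul_le_mul_of_nonneg_left hn2 (by positivity : (0:ℝ) ≤ |y|^2)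
        have q2' := q2
        ring_nf at step q2' ⊢
        linarith
      have e2 : (‖w‖)^2/(2*n) ≤ |y|^2/4 := by
        rw [div_le_iff₀ (by positivity : (0:ℝ) < 2*n)]
        have step := mul_le_mul_of_nonneg_left hn2 (by positivity : (0:ℝ) ≤ |y|^2/2)
        have hw2' := hw2
        ring_nf at step hw2' ⊢
        linarith
      have hsq : y^2 = |y|^2 := (sq_abs y).symm
      have hπ2 : (9:ℝ) ≤ π^2 := by
        calc (9:ℝ) = 3*3 := by norm_num
          _ ≤ π*π := mul_le_mul hπ.le hπ.le (by norm_num) (by linarith)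
          _ = π^2 := (sq π).symm
      have h9 : 9*|y|^2 ≤ π^2*|y|^2 := mul_le_mul_of_nonneg_right hπ2 (sq_nonneg _)
      have hre' := hre
      rw [hsq] at hre'
      linarith [sq_nonneg (|y|)]
    have habs_t2 : ‖tSeq n y‖ ≤ Real.exp (-(7*|y|^2)) :=
      le_trans habs_t (Real.exp_le_exp.mpr hexp_bound)
    have habsw₀ : ‖Complex.exp w₀‖ ≤ Real.exp (-(7*|y|^2)) := by
      rw [Complex.norm_exp, hw₀re]
      apply Real.exp_le_exp.mpr
      have hπ2 : (9:ℝ) ≤ π^2 := by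
        calc (9:ℝ) = 3*3 := by norm_num
          _ ≤ π*π := mul_le_mul hπ.le hπ.le (by norm_num) (by linarith)
          _ = π^2 := (sq π).symm
      have h9 := mul_le_mul_of_nonneg_right hπ2 (sq_nonneg (|y|))
      have hsq : y^2 = |y|^2 := (sq_abs y).symm
      rw [hsq]
      linarith [sq_nonneg (|y|)]
    have hYr : |y|^r ≤ Real.exp (|y|^2) := by
      have hlog : Real.log |y| ≤ |y| :=
        le_trans (Real.log_le_sub_one_of_pos hY) (by linarith)
      have hrY : (r:ℝ) ≤ |y| := by rw [hY₀def] at hYc; linarith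
      have hlognn : 0 ≤ Real.log |y| := Real.log_nonneg hY1
      calc |y|^r = Real.exp ((r:ℝ) * Real.log |y|) := by
            rw [Real.exp_nat_mul, Real.exp_log hY]
        _ ≤ Real.exp (|y|^2) := by
            apply Real.exp_le_exp.mpr
            have k1 := mul_le_mul_of_nonneg_left hlog (Nat.cast_nonneg r : (0:ℝ) ≤ (r:ℝ))
            have k2 := mul_le_mul_of_nonneg_right hrY (abs_nonneg y)
            have k3 : |y| * |y| = |y|^2 := by ring
            linarith
    have h2exp : (2:ℝ) < Real.exp (|y|^2) := by
      have := Real.exp_one_gt_d9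
      have hmono : Real.exp 1 ≤ Real.exp (|y|^2) := Real.exp_le_exp.mpr (one_le_pow₀ hY1)
      linarith
    have key : 2 * |y|^r < Real.exp (7*|y|^2) := by
      have h1r : (1:ℝ) ≤ |y|^r := one_le_pow₀ hY1
      calc 2 * |y|^r < Real.exp (|y|^2) * Real.exp (|y|^2) := by
            have k1 := mul_lt_mul_of_pos_right h2exp (by positivity : (0:ℝ) < |y|^r)
            have k2 := mul_le_mul_of_nonneg_left hYr (le_of_lt (Real.exp_pos (|y|^2)))
            linarith
        _ = Real.exp (2*|y|^2) := by rw [← Real.exp_add]; ring_nf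
        _ ≤ Real.exp (7*|y|^2) := Real.exp_le_exp.mpr (by linarith [sq_nonneg (|y|)])
    have hfinal : 2 * Real.exp (-(7*|y|^2)) < 1 / |y|^r := by
      rw [Real.exp_neg]
      have hrw : 2 * (Real.exp (7*|y|^2))⁻¹ = 2 / Real.exp (7*|y|^2) := by ring
      rw [hrw, div_lt_div_iff₀ (Real.exp_pos _) (pow_pos hY r)]
      linarith
    calc ‖tSeq n y - ((Real.exp (-(π ^ 2) * y ^ 2) : ℝ) : ℂ)‖
        ≤ ‖tSeq n y‖ + ‖Complex.exp w₀‖ := by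
          rw [hexpw₀]; exact norm_sub_le _ _
      _ ≤ Real.exp (-(7*|y|^2)) + Real.exp (-(7*|y|^2)) := add_le_add habs_t2 habsw₀
      _ = 2 * Real.exp (-(7*|y|^2)) := by ring
      _ < 1 / |y|^r := hfinal
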